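/- arXiv:1412.1110 — 2 statements merged into one kernel-verified Lean document; each statement's English description precedes it below -/
import Mathlib

section
/- For all integers m, n, k ≥ 1: C(m+n-k, k-1) = Σ_{i=0}^{n} Σ_{j=0}^{m} β_{i,j} · (-1)^{(i+1)(j+1)} · C(n,i) · C(m-⌈j/2⌉, m-j) · C(i-k+⌊j/2⌋, i-2k+j+1), where β_{i,j} = χ(j is even) + χ(j is odd and i = n). -/
open Finset

/-- Binomial coefficient with integer arguments: C(a,0) = 1 for every integer a, and
C(a,b) = 0 whenever b < 0 or 0 ≤ b ≤ a fails (for b > 0). -/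
def C (a b : ℤ) : ℤ :=
  if b = 0 then 1 else if 0 ≤ b ∧ b ≤ a then (a.toNat.choose b.toNat : ℤ) else 0

/-! The Jacobsthal polynomials `J₀ = 0`, `J₁ = 1`, `J_{j+2} = J_{j+1} + X J_j` have
`[X^s] J_{j+1} = C(j - s, s)`, so the left side is `[X^{k-1}] J_{m+n}`. The addition formula
`J_{m+n} = J_{m+1} J_n + X J_m J_{n-1}` turns it into two convolutions of such coefficients: the
odd-`j` terms (present only for `i = n`) give `[X^{k-1}] X J_m J_{n-1}`, and the even-`j` terms give
`∑ᵢ (-1)^(i+1) C(n,i) [X^{k-1}] J_{m+1} J_i`. Finally `∑ᵢ (-1)^(i+1) C(n,i) J_i = J_n`, because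
`n ↦ (-1)^(n+1) Δⁿ J 0` satisfies the Jacobsthal recurrence: `Δ² = X - Δ` on its solutions. -/

open Polynomial (X)
open scoped Polynomial fwdDiff

lemma sum_range_two_mul {M : Type*} [AddCommMonoid M] (f : ℕ → M) (N : ℕ) :
    ∑ j ∈ range (2 * N), f j = ∑ t ∈ range N, (f (2 * t) + f (2 * t + 1)) := by
  induction N with
  | zero => simp
  | succ N ih =>
    rw [mul_add, mul_one, sum_range_succ, sum_range_succ, sum_range_succ, ih, add_assoc]

lemma fwdDiff_iter_add_two_of_recurrence {R : Type*} [CommRing R] {c : R} {u : ℕ → R}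
    (hu : ∀ j, u (j + 2) = u (j + 1) + c * u j) (n : ℕ) :
    (Δ_[1])^[n + 2] u = c • (Δ_[1])^[n] u - (Δ_[1])^[n + 1] u := by
  have h₂ : (Δ_[1])^[2] u = c • u + (-1 : R) • Δ_[1] u := by
    funext j
    simp only [Function.iterate_succ_apply, Function.iterate_zero_apply, fwdDiff, Pi.add_apply,
      Pi.smul_apply, smul_eq_mul, add_assoc, one_add_one_eq_two, hu]
    ring
  rw [Function.iterate_add_apply, h₂, fwdDiff_iter_add, fwdDiff_iter_const_smul,
    fwdDiff_iter_const_smul, ← Function.iterate_succ_apply, neg_one_smul, sub_eq_add_neg]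

@[simp]
lemma C_zero_right (a : ℤ) : C a 0 = 1 := if_pos rfl

lemma C_of_neg {a b : ℤ} (hb : b < 0) : C a b = 0 := by
  simp only [C]; rw [if_neg (by omega), if_neg (by omega)]

lemma C_of_lt {a b : ℤ} (hb : 0 < b) (hab : a < b) : C a b = 0 := by
  simp only [C]; rw [if_neg (by omega), if_neg (by omega)]

lemma C_eq_choose {a b : ℤ} (ha : 0 ≤ a) (hb : 0 ≤ b) : C a b = a.toNat.choose b.toNat := by
  rcases eq_or_ne b 0 with rfl | hb0
  · simp
  rcases le_or_gt b a with hba | hab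
  · simp only [C]; rw [if_neg hb0, if_pos ⟨hb, hba⟩]
  · rw [C_of_lt (by omega) hab, Nat.choose_eq_zero_of_lt (by omega), Nat.cast_zero]

lemma C_pascal {a b : ℤ} (h : b = 1 → 1 ≤ a) : C a b = C (a - 1) (b - 1) + C (a - 1) b := by
  rcases lt_trichotomy b 0 with hb | rfl | hb
  · rw [C_of_neg hb, C_of_neg (by omega), C_of_neg hb, add_zero]
  · rw [C_zero_right, C_zero_right, C_of_neg (by omega), zero_add]
  rcases le_or_gt b a with hba | hab
  · have ha : a.toNat = (a - 1).toNat + 1 := by omega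
    have hb' : b.toNat = (b - 1).toNat + 1 := by omega
    rw [C_eq_choose (by omega) hb.le, C_eq_choose (by omega) (by omega),
      C_eq_choose (by omega) hb.le, ha, hb', Nat.choose_succ_succ', Nat.cast_add]
  · have hb1 : b ≠ 1 := fun hb1 => by linarith [h hb1]
    rw [C_of_lt hb hab, C_of_lt (by omega) (by omega), C_of_lt hb (by omega), add_zero]

lemma C_symm {a : ℤ} (ha : 0 ≤ a) (b : ℤ) : C a (a - b) = C a b := by
  rcases lt_or_ge b 0 with hb | hb
  · rw [C_of_neg hb, C_of_lt (by omega) (by omega)]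
  rcases le_or_gt b a with hba | hab
  · rw [C_eq_choose ha (by omega), C_eq_choose ha hb,
      show (a - b).toNat = a.toNat - b.toNat by omega, Nat.choose_symm (by omega)]
  · rw [C_of_neg (by omega), C_of_lt (by omega) hab]

noncomputable def jacobsthalPoly : ℕ → ℤ[X]
  | 0 => 0
  | 1 => 1
  | n + 2 => jacobsthalPoly (n + 1) + X * jacobsthalPoly n

namespace jacobsthalPoly

@[simp] lemma zero : jacobsthalPoly 0 = 0 := rfl

@[simp] lemma one : jacobsthalPoly 1 = 1 := rfl

lemma add_two (n : ℕ) : jacobsthalPoly (n + 2) = jacobsthalPoly (n + 1) + X * jacobsthalPoly n :=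
  rfl

end jacobsthalPoly

lemma jacobsthalPoly_add (a b : ℕ) :
    jacobsthalPoly (a + b + 1) =
      jacobsthalPoly (a + 1) * jacobsthalPoly (b + 1) +
        X * jacobsthalPoly a * jacobsthalPoly b := by
  induction b using Nat.twoStepInduction with
  | zero => simp
  | one => simp [jacobsthalPoly.add_two]
  | more b ih₀ ih₁ =>
    rw [show a + (b + 2) + 1 = a + (b + 1) + 1 + 1 by ring, jacobsthalPoly.add_two, ih₁,
      ← add_assoc, ih₀, jacobsthalPoly.add_two (b + 1), jacobsthalPoly.add_two b]
    ring

def jacobsthalCoeff (j : ℕ) (s : ℤ) : ℤ := C (j - 1 - s) (j - 1 - 2 * s)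

lemma jacobsthalCoeff_of_neg (j : ℕ) {s : ℤ} (hs : s < 0) : jacobsthalCoeff j s = 0 :=
  C_of_lt (by omega) (by omega)

lemma jacobsthalCoeff_of_le {j : ℕ} {s : ℤ} (hjs : j ≤ s) : jacobsthalCoeff j s = 0 :=
  C_of_neg (by omega)

lemma jacobsthalCoeff_add_two (j : ℕ) (s : ℤ) :
    jacobsthalCoeff (j + 2) s = jacobsthalCoeff (j + 1) s + jacobsthalCoeff j (s - 1) := by
  unfold jacobsthalCoeff
  rw [C_pascal (by omega)]
  push_cast
  congr 1 <;> congr 1 <;> ring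

lemma coeff_jacobsthalPoly (j s : ℕ) : (jacobsthalPoly j).coeff s = jacobsthalCoeff j s := by
  induction j using Nat.twoStepInduction generalizing s with
  | zero => rw [jacobsthalPoly.zero, Polynomial.coeff_zero, jacobsthalCoeff_of_le (by omega)]
  | one =>
    rcases s with _ | s
    · simp [jacobsthalCoeff]
    · rw [jacobsthalPoly.one, Polynomial.coeff_one, if_neg (by omega), jacobsthalCoeff,
        C_of_neg (by omega)]
  | more j ih₀ ih₁ =>
    rw [jacobsthalPoly.add_two, Polynomial.coeff_add, ih₁, jacobsthalCoeff_add_two]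
    rcases s with _ | s
    · rw [Polynomial.coeff_X_mul_zero, Nat.cast_zero, zero_sub,
        jacobsthalCoeff_of_neg j (by norm_num : (-1 : ℤ) < 0)]
    · rw [Polynomial.coeff_X_mul, ih₀]
      push_cast
      ring_nf

lemma coeff_jacobsthalPoly_succ (j s : ℕ) : (jacobsthalPoly (j + 1)).coeff s = C (j - s) s := by
  rw [coeff_jacobsthalPoly, jacobsthalCoeff]
  push_cast
  rcases le_or_gt s j with hsj | hjs
  · rw [← C_symm (by omega) s]
    congr 1 <;> ring
  · rw [C_of_neg (by omega), C_of_lt (by omega) (by omega)]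

lemma neg_one_pow_smul_fwdDiff_iter_jacobsthalPoly (n : ℕ) :
    (-1 : ℤ) ^ (n + 1) • (Δ_[1])^[n] jacobsthalPoly 0 = jacobsthalPoly n := by
  induction n using Nat.twoStepInduction with
  | zero => simp
  | one => simp [fwdDiff]
  | more n ih₀ ih₁ =>
    rw [fwdDiff_iter_add_two_of_recurrence jacobsthalPoly.add_two, jacobsthalPoly.add_two, ← ih₀,
      ← ih₁]
    simp only [Pi.sub_apply, Pi.smul_apply, pow_succ, smul_sub, mul_smul, smul_eq_mul]
    ring

lemma sum_neg_one_pow_mul_choose_smul_jacobsthalPoly (n : ℕ) :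
    ∑ i ∈ range (n + 1), ((-1) ^ (i + 1) * n.choose i : ℤ) • jacobsthalPoly i =
      jacobsthalPoly n := by
  rw [← neg_one_pow_smul_fwdDiff_iter_jacobsthalPoly, fwdDiff_iter_eq_sum_shift, smul_sum]
  refine sum_congr rfl fun i hi => ?_
  rw [smul_smul, zero_add, smul_eq_mul, mul_one, ← mul_assoc, ← pow_add,
    show n + 1 + (n - i) = i + 1 + 2 * (n - i) by have := mem_range.1 hi; omega,
    pow_add _ (i + 1), pow_mul, neg_one_sq, one_pow, mul_one]

lemma coeff_jacobsthalPoly_mul {a : ℕ} (b d : ℕ) {N : ℕ} (haN : a ≤ N) :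
    (jacobsthalPoly a * jacobsthalPoly b).coeff d =
      ∑ t ∈ range N, jacobsthalCoeff a t * jacobsthalCoeff b (d - t) := by
  rw [Polynomial.coeff_mul, Nat.sum_antidiagonal_eq_sum_range_succ_mk]
  calc ∑ t ∈ range (d + 1), (jacobsthalPoly a).coeff t * (jacobsthalPoly b).coeff (d - t)
      = ∑ t ∈ range (N + d + 1), jacobsthalCoeff a t * jacobsthalCoeff b (d - t) := by
        refine sum_subset_zero_on_sdiff (range_subset_range.2 (by omega)) ?_ ?_
        · intro t ht
          have : d < t := by simp only [mem_sdiff, mem_range] at ht; omega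
          rw [jacobsthalCoeff_of_neg b (by omega), mul_zero]
        · intro t ht
          rw [coeff_jacobsthalPoly, coeff_jacobsthalPoly,
            Nat.cast_sub (Nat.lt_succ_iff.1 (mem_range.1 ht))]
    _ = ∑ t ∈ range N, jacobsthalCoeff a t * jacobsthalCoeff b (d - t) := by
        refine (sum_subset (range_subset_range.2 (by omega)) fun t _ ht => ?_).symm
        rw [jacobsthalCoeff_of_le (by simp only [mem_range] at ht; omega), zero_mul]

lemma coeff_X_mul_jacobsthalPoly_mul {a : ℕ} (b d : ℕ) {N : ℕ} (haN : a ≤ N) :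
    (X * (jacobsthalPoly a * jacobsthalPoly b)).coeff d =
      ∑ t ∈ range N, jacobsthalCoeff a t * jacobsthalCoeff b (d - 1 - t) := by
  rcases d with _ | d
  · rw [Polynomial.coeff_X_mul_zero]
    exact (sum_eq_zero fun t _ => by rw [jacobsthalCoeff_of_neg b (by omega), mul_zero]).symm
  · rw [Polynomial.coeff_X_mul, coeff_jacobsthalPoly_mul b d haN]
    push_cast
    simp only [add_sub_cancel_right]

def identityTerm (m n k i j : ℕ) : ℤ :=
  ((if Even j then 1 else 0) + (if Odd j ∧ i = n then 1 else 0) : ℤ) *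
    (-1) ^ ((i + 1) * (j + 1)) * (n.choose i : ℤ) *
    C ((m : ℤ) - ((j : ℤ) + 1) / 2) ((m : ℤ) - j) *
    C ((i : ℤ) - k + (j : ℤ) / 2) ((i : ℤ) - 2 * k + j + 1)

lemma identityTerm_of_lt {m j : ℕ} (n k i : ℕ) (hmj : m < j) : identityTerm m n k i j = 0 := by
  rw [identityTerm, C_of_neg (a := (m : ℤ) - ((j : ℤ) + 1) / 2) (by omega), mul_zero, zero_mul]

lemma identityTerm_two_mul (m n d i t : ℕ) :
    identityTerm m n (d + 1) i (2 * t) =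
      (-1) ^ (i + 1) * n.choose i * (jacobsthalCoeff (m + 1) t * jacobsthalCoeff i (d - t)) := by
  have hsign : (-1 : ℤ) ^ ((i + 1) * (2 * t + 1)) = (-1) ^ (i + 1) := by
    rw [mul_add, mul_one, mul_left_comm, pow_add, pow_mul, neg_one_sq, one_pow, one_mul]
  simp only [identityTerm, even_two_mul, if_true, Nat.not_odd_iff_even.2 (even_two_mul t),
    false_and, if_false, add_zero, one_mul, hsign, jacobsthalCoeff]
  push_cast
  rw [show (2 * (t : ℤ) + 1) / 2 = t by omega, show 2 * (t : ℤ) / 2 = t by omega]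
  ring_nf

lemma identityTerm_two_mul_add_one (m n d i t : ℕ) :
    identityTerm m (n + 1) (d + 1) i (2 * t + 1) =
      if i = n + 1 then jacobsthalCoeff m t * jacobsthalCoeff n (d - 1 - t) else 0 := by
  have hsign : (-1 : ℤ) ^ ((i + 1) * (2 * t + 1 + 1)) = 1 := by
    rw [show (i + 1) * (2 * t + 1 + 1) = 2 * ((i + 1) * (t + 1)) by ring, pow_mul, neg_one_sq,
      one_pow]
  simp only [identityTerm, Nat.not_even_iff_odd.2 (odd_two_mul_add_one t), odd_two_mul_add_one,
    true_and, if_false, zero_add, hsign, mul_one]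
  split_ifs with hi
  · subst hi
    rw [Nat.choose_self, jacobsthalCoeff, jacobsthalCoeff]
    push_cast
    rw [show (2 * (t : ℤ) + 1 + 1) / 2 = t + 1 by omega, show (2 * (t : ℤ) + 1) / 2 = t by omega]
    ring_nf
  · simp

lemma sum_identityTerm (m n d i : ℕ) :
    ∑ j ∈ range (m + 1), identityTerm m (n + 1) (d + 1) i j =
      (-1) ^ (i + 1) * (n + 1).choose i * (jacobsthalPoly (m + 1) * jacobsthalPoly i).coeff d +
        if i = n + 1 then (X * (jacobsthalPoly m * jacobsthalPoly n)).coeff d else 0 := by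
  have hpad : ∑ j ∈ range (m + 1), identityTerm m (n + 1) (d + 1) i j =
      ∑ j ∈ range (2 * (m + 1)), identityTerm m (n + 1) (d + 1) i j :=
    sum_subset (range_subset_range.2 (by omega)) fun j _ hj =>
      identityTerm_of_lt _ _ _ (by simpa using hj)
  rw [hpad, sum_range_two_mul, sum_add_distrib]
  simp only [identityTerm_two_mul, identityTerm_two_mul_add_one, ← mul_sum]
  rw [coeff_jacobsthalPoly_mul i d le_rfl, coeff_X_mul_jacobsthalPoly_mul n d (Nat.le_succ m)]
  split_ifs <;> simp

theorem binom_identity_4_general (m n k : ℕ) (hn : 1 ≤ n) (hk : 1 ≤ k) :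
    C ((m : ℤ) + n - k) ((k : ℤ) - 1) =
      ∑ i ∈ range (n + 1), ∑ j ∈ range (m + 1),
        ((if Even j then 1 else 0) + (if Odd j ∧ i = n then 1 else 0) : ℤ) *
          (-1) ^ ((i + 1) * (j + 1)) * (n.choose i : ℤ) *
          C ((m : ℤ) - ((j : ℤ) + 1) / 2) ((m : ℤ) - j) *
          C ((i : ℤ) - k + (j : ℤ) / 2) ((i : ℤ) - 2 * k + j + 1) := by
  obtain ⟨n, rfl⟩ := Nat.exists_eq_add_of_le' hn
  obtain ⟨d, rfl⟩ := Nat.exists_eq_add_of_le' hk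
  change _ = ∑ i ∈ range (n + 2), ∑ j ∈ range (m + 1), identityTerm m (n + 1) (d + 1) i j
  calc C ((m : ℤ) + ↑(n + 1) - ↑(d + 1)) (↑(d + 1) - 1)
      = (jacobsthalPoly (m + n + 1)).coeff d := by
        rw [coeff_jacobsthalPoly_succ]
        push_cast
        ring_nf
    _ = (jacobsthalPoly (m + 1) * jacobsthalPoly (n + 1) +
          X * (jacobsthalPoly m * jacobsthalPoly n)).coeff d := by
        rw [jacobsthalPoly_add, mul_assoc]
    _ = ∑ i ∈ range (n + 2), ((-1) ^ (i + 1) * (n + 1).choose i *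
            (jacobsthalPoly (m + 1) * jacobsthalPoly i).coeff d) +
          (X * (jacobsthalPoly m * jacobsthalPoly n)).coeff d := by
        rw [Polynomial.coeff_add, ← sum_neg_one_pow_mul_choose_smul_jacobsthalPoly (n + 1),
          mul_sum, Polynomial.finsetSum_coeff]
        simp only [mul_smul_comm, Polynomial.coeff_smul, smul_eq_mul]
    _ = ∑ i ∈ range (n + 2), ∑ j ∈ range (m + 1), identityTerm m (n + 1) (d + 1) i j := by
        rw [sum_congr rfl fun i _ => sum_identityTerm m n d i, sum_add_distrib,
          sum_ite_eq', if_pos (self_mem_range_succ (n + 1))]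

theorem binom_identity_4 (m n k : ℕ) (hm : 1 ≤ m) (hn : 1 ≤ n) (hk : 1 ≤ k) :
    C ((m : ℤ) + n - k) ((k : ℤ) - 1) =
      ∑ i ∈ range (n + 1), ∑ j ∈ range (m + 1),
        ((if Even j then 1 else 0) + (if Odd j ∧ i = n then 1 else 0) : ℤ) *
          (-1) ^ ((i + 1) * (j + 1)) * (n.choose i : ℤ) *
          C ((m : ℤ) - ((j : ℤ) + 1) / 2) ((m : ℤ) - j) *
          C ((i : ℤ) - k + (j : ℤ) / 2) ((i : ℤ) - 2 * k + j + 1) :=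
  binom_identity_4_general m n k hn hk
end

section
/- For all integers m, n, r ≥ 0 and every integer k, in ℤ[q]: L_q^{(r)}(m+n,k) = Σ_{i=0}^{n} Σ_{j=0}^{k} q^{i(j+m+2r)} · [j+m+2r]_q^{⟨n-i⟩} · qbinom(n,i) · L_q^{(r)}(m,j) · L_q(i,k-j). -/
open Finset Polynomial

/-- The q-integer [n]_q = 1 + q + ⋯ + q^{n-1} in ℤ[q]. -/
noncomputable def qint (n : ℕ) : Polynomial ℤ := ∑ i ∈ range n, X ^ i

/-- The q-rising factorial [n]_q^{⟨m⟩} = ∏_{i=n}^{n+m-1} [i]_q. -/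
noncomputable def qrise (n m : ℕ) : Polynomial ℤ := ∏ i ∈ range m, qint (n + i)

/-- The q-binomial coefficient. -/
noncomputable def qbinom : ℕ → ℕ → Polynomial ℤ
  | _, 0 => 1
  | 0, _ + 1 => 0
  | n + 1, k + 1 => qbinom n k + X ^ (k + 1) * qbinom n (k + 1)

/-- The q-Lah numbers (natural-number index version). -/
noncomputable def qLahNat : ℕ → ℕ → Polynomial ℤ
  | 0, 0 => 1
  | 0, _ + 1 => 0
  | _ + 1, 0 => 0
  | n + 1, k + 1 => X ^ (n + k) * qLahNat n k + qint (n + k + 1) * qLahNat n (k + 1)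

/-- The q-Lah numbers, vanishing for negative second index. -/
noncomputable def qLah (n : ℕ) (k : ℤ) : Polynomial ℤ :=
  if 0 ≤ k then qLahNat n k.toNat else 0

/-- The q-r-Lah numbers. -/
noncomputable def qrLah (r n : ℕ) (k : ℤ) : Polynomial ℤ :=
  ∑ i ∈ range (n + 1), X ^ (r * (2 * i + r - 1)) * qrise (2 * r) (n - i) * qbinom n i *
    qLah i k

/-!
Both sides satisfy the same recurrence in `n`. Expanding `qbinom (n + 1) i` by the second
q-Pascal rule and `L_q(i + 1, k)` by its defining recurrence shows that
`Φ_a(n, k) = Σ_i q^{ia} [a]^⟨n-i⟩ qbinom(n, i) L_q(i, k)` (`qLahShift a n k`) satisfies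
`Φ_a(n + 1, k) = q^{n+a+k-1} Φ_a(n, k - 1) + [n + a + k] Φ_a(n, k)`.
Since `L_q^{(r)}(n, k) = q^{r(r-1)} Φ_{2r}(n, k)`, the q-r-Lah numbers satisfy this recurrence
with `a = 2r`, while the right-hand side is `Σ_j L_q^{(r)}(m, j) Φ_{j+m+2r}(n, k - j)`, in which
`n + (j + m + 2r) + (k - j)` does not depend on `j`. Induction on `n` finishes the proof.
-/

lemma sum_range_succ_of_eq_zero {M : Type*} [AddCommMonoid M] {f : ℕ → M} {n : ℕ}
    (h : f n = 0) : ∑ i ∈ range (n + 1), f i = ∑ i ∈ range n, f i := by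
  rw [sum_range_succ, h, add_zero]

lemma qint_add (a b : ℕ) : qint (a + b) = qint a + X ^ a * qint b := by
  simp only [qint, sum_range_add, mul_sum, pow_add]

lemma qrise_succ (a m : ℕ) : qrise a (m + 1) = qrise a m * qint (a + m) :=
  prod_range_succ _ _

lemma qbinom_zero_right (n : ℕ) : qbinom n 0 = 1 := by
  cases n <;> rfl

lemma qbinom_succ_succ (n k : ℕ) :
    qbinom (n + 1) (k + 1) = qbinom n k + X ^ (k + 1) * qbinom n (k + 1) :=
  rfl

lemma qbinom_eq_zero_of_lt {n k : ℕ} (h : n < k) : qbinom n k = 0 := by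
  induction n generalizing k with
  | zero => obtain ⟨k, rfl⟩ := Nat.exists_eq_succ_of_ne_zero h.ne'; rfl
  | succ n ih =>
    obtain ⟨k, rfl⟩ := Nat.exists_eq_succ_of_ne_zero (Nat.ne_zero_of_lt h)
    rw [qbinom_succ_succ, ih (by omega), ih (by omega), mul_zero, add_zero]

lemma qbinom_succ_succ' (n k : ℕ) :
    qbinom (n + 1) (k + 1) = X ^ (n - k) * qbinom n k + qbinom n (k + 1) := by
  induction n generalizing k with
  | zero =>
    cases k <;> simp [qbinom_succ_succ, qbinom_zero_right, qbinom_eq_zero_of_lt]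
  | succ n ih =>
    cases k with
    | zero =>
      have h := ih 0
      simp only [qbinom_succ_succ, qbinom_zero_right, Nat.sub_zero] at h ⊢
      linear_combination X * h
    | succ k =>
      have hX : X ^ (k + 2) * X ^ (n - (k + 1)) * qbinom n (k + 1)
          = X ^ (n - k) * X ^ (k + 1) * qbinom n (k + 1) := by
        rcases le_or_gt (k + 1) n with h | h
        · rw [← pow_add, ← pow_add]; congr 2; omega
        · rw [qbinom_eq_zero_of_lt h, mul_zero, mul_zero]
      conv_rhs => rw [qbinom_succ_succ n k, qbinom_succ_succ n (k + 1)]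
      rw [qbinom_succ_succ (n + 1), ih k, ih (k + 1), Nat.succ_sub_succ]
      linear_combination hX

lemma sum_qbinom_succ_mul (n : ℕ) (g : ℕ → ℤ[X]) :
    ∑ i ∈ range (n + 2), qbinom (n + 1) i * g i =
      ∑ i ∈ range (n + 1), qbinom n i * (g i + X ^ (n - i) * g (i + 1)) := by
  have hshift : ∑ i ∈ range (n + 1), qbinom n i * g i =
      ∑ i ∈ range (n + 1), qbinom n (i + 1) * g (i + 1) + g 0 := by
    rw [← sum_range_succ_of_eq_zero, sum_range_succ', qbinom_zero_right, one_mul]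
    rw [qbinom_eq_zero_of_lt n.lt_succ_self, zero_mul]
  calc ∑ i ∈ range (n + 2), qbinom (n + 1) i * g i
      = ∑ i ∈ range (n + 1), qbinom (n + 1) (i + 1) * g (i + 1) + g 0 := by
        rw [sum_range_succ', qbinom_zero_right, one_mul]
    _ = ∑ i ∈ range (n + 1),
          (qbinom n (i + 1) * g (i + 1) + qbinom n i * (X ^ (n - i) * g (i + 1))) + g 0 := by
        congr 1
        exact sum_congr rfl fun i _ => by rw [qbinom_succ_succ']; ring
    _ = _ := by
        rw [sum_add_distrib, add_right_comm, ← hshift, ← sum_add_distrib]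
        simp only [mul_add]

lemma qLah_of_neg (n : ℕ) {k : ℤ} (hk : k < 0) : qLah n k = 0 :=
  if_neg hk.not_ge

lemma qLah_zero_left (k : ℤ) : qLah 0 k = if k = 0 then 1 else 0 := by
  rcases k with (_ | k) | k <;> rfl

lemma qLah_succ (n : ℕ) (k : ℤ) :
    qLah (n + 1) k = X ^ (n + (k - 1).toNat) * qLah n (k - 1) + qint (n + k.toNat) * qLah n k := by
  rcases k with (_ | k) | k
  · cases n <;> simp [qLah, qLahNat, qint]
  · have hk : (0 : ℤ) ≤ k + 1 := by omega
    simp [qLah, qLahNat, Nat.add_assoc, hk]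
  · simp [qLah]

/-- `q ^ (-r (r - 1)) L_q^{(r)}(n, k)` with the shift `2 r` replaced by an arbitrary `a`. -/
noncomputable def qLahShift (a n : ℕ) (k : ℤ) : ℤ[X] :=
  ∑ i ∈ range (n + 1), X ^ (i * a) * qrise a (n - i) * qbinom n i * qLah i k

lemma qLahShift_zero (a : ℕ) (k : ℤ) : qLahShift a 0 k = qLah 0 k := by
  simp [qLahShift, qrise, qbinom_zero_right]

lemma qLahShift_of_neg (a n : ℕ) {k : ℤ} (hk : k < 0) : qLahShift a n k = 0 :=
  sum_eq_zero fun i _ => by rw [qLah_of_neg i hk, mul_zero]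

lemma qLahShift_succ (a n : ℕ) (k : ℤ) :
    qLahShift a (n + 1) k = X ^ (n + a + (k - 1).toNat) * qLahShift a n (k - 1)
      + qint (n + a + k.toNat) * qLahShift a n k := by
  have hpascal := sum_qbinom_succ_mul n fun i => X ^ (i * a) * qrise a (n + 1 - i) * qLah i k
  have hterm : ∀ i ∈ range (n + 1),
      X ^ (i * a) * qrise a (n + 1 - i) * qLah i k
        + X ^ (n - i) * (X ^ ((i + 1) * a) * qrise a (n + 1 - (i + 1)) * qLah (i + 1) k)
      = X ^ (n + a + (k - 1).toNat) * (X ^ (i * a) * qrise a (n - i) * qLah i (k - 1))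
        + qint (n + a + k.toNat) * (X ^ (i * a) * qrise a (n - i) * qLah i k) := by
    intro i hi
    -- with `n = i + d`: `[a]^⟨d+1⟩ = [a]^⟨d⟩ [a+d]` and `[a+d] + q^(a+d) [i+k] = [n+a+k]`
    obtain ⟨d, rfl⟩ := Nat.exists_eq_add_of_le (mem_range_succ_iff.mp hi)
    rw [show i + d + 1 - i = d + 1 by omega, Nat.add_sub_add_right, Nat.add_sub_cancel_left,
      qrise_succ, qLah_succ, show i + d + a + k.toNat = (a + d) + (i + k.toNat) by omega,
      qint_add (a + d)]
    ring
  calc qLahShift a (n + 1) k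
      = ∑ i ∈ range (n + 2),
          qbinom (n + 1) i * (X ^ (i * a) * qrise a (n + 1 - i) * qLah i k) :=
        sum_congr rfl fun i _ => by ring
    _ = _ := by
        rw [hpascal, qLahShift, qLahShift, mul_sum, mul_sum, ← sum_add_distrib]
        exact sum_congr rfl fun i hi => by rw [hterm i hi]; ring

lemma qrLah_eq_qLahShift (r n : ℕ) (k : ℤ) :
    qrLah r n k = X ^ (r * (r - 1)) * qLahShift (2 * r) n k := by
  rw [qLahShift, mul_sum]
  refine sum_congr rfl fun i _ => ?_
  have hexp : r * (2 * i + r - 1) = r * (r - 1) + i * (2 * r) := by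
    rcases r with _ | r
    · simp
    · rw [Nat.add_sub_cancel, show 2 * i + (r + 1) - 1 = 2 * i + r by omega]
      ring
  rw [hexp, pow_add]
  ring

lemma qrLah_of_neg (r n : ℕ) {k : ℤ} (hk : k < 0) : qrLah r n k = 0 := by
  rw [qrLah_eq_qLahShift, qLahShift_of_neg _ _ hk, mul_zero]

lemma qrLah_succ (r n : ℕ) (k : ℤ) :
    qrLah r (n + 1) k = X ^ (n + 2 * r + (k - 1).toNat) * qrLah r n (k - 1)
      + qint (n + 2 * r + k.toNat) * qrLah r n k := by
  simp only [qrLah_eq_qLahShift, qLahShift_succ]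
  ring

lemma qrLah_add_eq_sum_mul_qLahShift (r m n : ℕ) (k : ℤ) :
    qrLah r (m + n) k =
      ∑ j ∈ Icc (0 : ℤ) k, qrLah r m j * qLahShift (j.toNat + m + 2 * r) n (k - j) := by
  induction n generalizing k with
  | zero =>
    simp only [Nat.add_zero, qLahShift_zero, qLah_zero_left, sub_eq_zero, mul_ite, mul_one,
      mul_zero, sum_ite_eq, mem_Icc, le_refl, and_true]
    split_ifs with hk
    · rfl
    · exact qrLah_of_neg r m (not_le.mp hk)
  | succ n ih =>
    have hextend : ∑ j ∈ Icc (0 : ℤ) (k - 1),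
          qrLah r m j * qLahShift (j.toNat + m + 2 * r) n (k - 1 - j)
        = ∑ j ∈ Icc (0 : ℤ) k,
            qrLah r m j * qLahShift (j.toNat + m + 2 * r) n (k - 1 - j) := by
      refine sum_subset (Icc_subset_Icc le_rfl (by omega)) fun j hj hj' => ?_
      rw [mem_Icc] at hj hj'
      rw [qLahShift_of_neg _ _ (by omega), mul_zero]
    rw [← Nat.add_assoc, qrLah_succ, ih, ih, hextend, mul_sum, mul_sum, ← sum_add_distrib]
    refine sum_congr rfl fun j hj => ?_
    rw [mem_Icc] at hj
    rw [qLahShift_succ, sub_right_comm,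
      show m + n + 2 * r + k.toNat = n + (j.toNat + m + 2 * r) + (k - j).toNat by omega]
    rcases hj.2.eq_or_lt with rfl | hjk
    · simp only [qLahShift_of_neg _ _ (show j - j - 1 < 0 by omega)]
      ring
    · rw [show m + n + 2 * r + (k - 1).toNat = n + (j.toNat + m + 2 * r) + (k - j - 1).toNat by
        omega]
      ring

theorem qrLah_add (m n r : ℕ) (k : ℤ) :
    qrLah r (m + n) k =
      ∑ i ∈ range (n + 1), ∑ j ∈ Icc (0 : ℤ) k,
        X ^ (i * (j.toNat + m + 2 * r)) * qrise (j.toNat + m + 2 * r) (n - i) * qbinom n i *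
          qrLah r m j * qLah i (k - j) := by
  rw [qrLah_add_eq_sum_mul_qLahShift, sum_comm]
  refine sum_congr rfl fun j _ => ?_
  rw [qLahShift, mul_sum]
  exact sum_congr rfl fun i _ => by ring
end
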